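/- arXiv:2310.20562 — 4 statements merged into one kernel-verified Lean document; each statement's English description precedes it below -/
import Mathlib

section
/- The commutative Lie algebra C_sh(C) spanned over R by G_{j1} = Λ^j − Λ^{−j} (j ≥ 1), G_{02} = i·Id, G_{j2} = i(Λ^j + Λ^{−j}) (j ≥ 1) is a maximal commutative Lie subalgebra of the real Lie algebra SH(C) of skew-hermitian matrices in LT_Z(C): every A ∈ SH(C) commuting with all G_σ lies in C_sh(C). -/
noncomputable def matMul {R : Type*} [CommRing R] (A B : ℤ → ℤ → R) : ℤ → ℤ → R :=
  fun i j => ∑ᶠ k, A i k * B k j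

def LTZ {R : Type*} [CommRing R] (A : ℤ → ℤ → R) : Prop :=
  ∃ N : ℤ, ∀ i j : ℤ, N < j - i → A i j = 0

def shiftPow (m : ℤ) : ℤ → ℤ → ℂ :=
  fun i j => if j = i + m then 1 else 0

def idM : ℤ → ℤ → ℂ := fun i j => if j = i then 1 else 0

/-- `A* = -A` entrywise: the conjugate transpose is minus the matrix. -/
def SkewHermitian (A : ℤ → ℤ → ℂ) : Prop :=
  ∀ i j : ℤ, starRingEnd ℂ (A j i) = -A i j

/-- The basic directions `G_{j1} = Λ^j - Λ^{-j}` (j ≥ 1), `G_{02} = i·Id`,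
    `G_{j2} = i(Λ^j + Λ^{-j})` (j ≥ 1). -/
def Gset : Set (ℤ → ℤ → ℂ) :=
  {A | (∃ j : ℤ, 1 ≤ j ∧ A = shiftPow j - shiftPow (-j)) ∨
       A = Complex.I • idM ∨
       (∃ j : ℤ, 1 ≤ j ∧ A = Complex.I • (shiftPow j + shiftPow (-j)))}

/-!
Every element of the real span of the `G_σ` is a Toeplitz matrix `(i, j) ↦ a (j - i)`, and
Toeplitz matrices commute: the entries of their product are convolutions of the symbols.
Conversely `(G₁₁ - i G₁₂) / 2 = Λ`, so a matrix commuting with `G₁₁` and `G₁₂` commutes with `Λ`,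
i.e. it is constant along diagonals. A skew-hermitian Toeplitz matrix has `a (-m) = -conj (a m)`
and `Re (a 0) = 0`, hence equals `Im (a 0) G₀₂ + ∑ₘ (Re (a m) G_{m1} + Im (a m) G_{m2})`, a finite
sum because the matrix lies in `LT_ℤ`.
-/

section Toeplitz

variable {R : Type*} [CommRing R]

def toeplitz : (ℤ → R) →ₗ[R] (ℤ → ℤ → R) where
  toFun a i j := a (j - i)
  map_add' _ _ := rfl
  map_smul' _ _ := rfl

theorem toeplitz_apply (a : ℤ → R) (i j : ℤ) : toeplitz a i j = a (j - i) := rfl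

theorem matMul_toeplitz_apply (a b : ℤ → R) (i j : ℤ) :
    matMul (toeplitz a) (toeplitz b) i j = ∑ᶠ m, a m * b (j - i - m) := by
  rw [matMul, ← finsum_comp_equiv (Equiv.addRight i)]
  simp [toeplitz_apply, sub_add_eq_sub_sub, sub_right_comm]

theorem matMul_toeplitz_comm (a b : ℤ → R) :
    matMul (toeplitz a) (toeplitz b) = matMul (toeplitz b) (toeplitz a) := by
  funext i j
  rw [matMul_toeplitz_apply, matMul_toeplitz_apply, ← finsum_comp_equiv (Equiv.subLeft (j - i))]
  simp [mul_comm]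

theorem eq_toeplitz_of_apply_add_one_add_one {A : ℤ → ℤ → R}
    (h : ∀ i j, A (i + 1) (j + 1) = A i j) : A = toeplitz (A 0) := by
  have shift : ∀ n i j : ℤ, A (i + n) (j + n) = A i j := by
    intro n
    induction n using Int.induction_on with
    | zero => simp
    | succ n ih => intro i j; rw [← add_assoc, ← add_assoc, h, ih]
    | pred n ih =>
      intro i j
      rw [← ih i j, ← h]
      congr 1 <;> ring
  funext i j
  simpa [toeplitz_apply, sub_eq_add_neg] using (shift (-i) i j).symm

end Toeplitz

theorem shiftPow_eq_toeplitz (m : ℤ) : shiftPow m = toeplitz (Pi.single m 1) := by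
  funext i j
  simp [shiftPow, toeplitz_apply, Pi.single_apply, sub_eq_iff_eq_add']

theorem idM_eq_toeplitz : idM = toeplitz (Pi.single 0 1) := by
  funext i j
  simp [idM, toeplitz_apply, Pi.single_apply, sub_eq_zero]

theorem span_Gset_le_range_toeplitz :
    Submodule.span ℝ Gset ≤ (LinearMap.range (toeplitz (R := ℂ))).restrictScalars ℝ := by
  have hshift (m : ℤ) : shiftPow m ∈ LinearMap.range (toeplitz (R := ℂ)) :=
    LinearMap.mem_range.mpr ⟨_, (shiftPow_eq_toeplitz m).symm⟩
  rw [Submodule.span_le]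
  rintro A (⟨j, -, rfl⟩ | rfl | ⟨j, -, rfl⟩)
  · exact sub_mem (hshift j) (hshift (-j))
  · exact Submodule.smul_mem _ _ (LinearMap.mem_range.mpr ⟨_, idM_eq_toeplitz.symm⟩)
  · exact Submodule.smul_mem _ _ (add_mem (hshift j) (hshift (-j)))

theorem finsum_eq_add {α M : Type*} [AddCommMonoid M] {f : α → M} {p q : α}
    (hpq : p ≠ q) (hf : ∀ k, k ≠ p → k ≠ q → f k = 0) : ∑ᶠ k, f k = f p + f q := by
  classical
  have hsupp : Function.support f ⊆ (({p, q} : Finset α) : Set α) := by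
    intro k hk
    by_contra hpq'
    simp only [Finset.coe_insert, Finset.coe_singleton, Set.mem_insert_iff,
      Set.mem_singleton_iff, not_or] at hpq'
    exact hk (hf k hpq'.1 hpq'.2)
  rw [finsum_eq_sum_of_support_subset f hsupp, Finset.sum_pair hpq]

theorem matMul_shiftPow_pair_right (A : ℤ → ℤ → ℂ) {m : ℤ} (hm : m ≠ 0) (c d : ℂ) (i j : ℤ) :
    matMul A (c • shiftPow m + d • shiftPow (-m)) i j = c * A i (j - m) + d * A i (j + m) := by
  rw [matMul, finsum_eq_add (p := j - m) (q := j + m) (by omega)]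
  · simp [shiftPow, show j ≠ j - m + -m by omega, show j ≠ j + m + m by omega]
    ring
  · intro k hp hq
    simp [shiftPow, show j ≠ k + m by omega, show j ≠ k + -m by omega]

theorem matMul_shiftPow_pair_left (A : ℤ → ℤ → ℂ) {m : ℤ} (hm : m ≠ 0) (c d : ℂ) (i j : ℤ) :
    matMul (c • shiftPow m + d • shiftPow (-m)) A i j = c * A (i + m) j + d * A (i - m) j := by
  rw [matMul, finsum_eq_add (p := i + m) (q := i - m) (by omega)]
  · simp [shiftPow, sub_eq_add_neg, show m ≠ -m by omega, show -m ≠ m by omega]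
  · intro k hp hq
    simp [shiftPow, hp, show k ≠ i + -m by omega]

theorem apply_add_one_add_one_of_commute {A : ℤ → ℤ → ℂ}
    (h₁ : matMul A (shiftPow 1 - shiftPow (-1)) = matMul (shiftPow 1 - shiftPow (-1)) A)
    (h₂ : matMul A (Complex.I • (shiftPow 1 + shiftPow (-1)))
      = matMul (Complex.I • (shiftPow 1 + shiftPow (-1))) A)
    (i j : ℤ) : A (i + 1) (j + 1) = A i j := by
  have hG₁ : shiftPow 1 - shiftPow (-1) = (1 : ℂ) • shiftPow 1 + (-1 : ℂ) • shiftPow (-1) := by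
    module
  rw [hG₁] at h₁
  rw [smul_add] at h₂
  have e₁ := congrFun (congrFun h₁ i) (j + 1)
  have e₂ := congrFun (congrFun h₂ i) (j + 1)
  simp only [matMul_shiftPow_pair_right _ one_ne_zero, matMul_shiftPow_pair_left _ one_ne_zero,
    add_sub_cancel_right] at e₁ e₂
  have e₂' : A i j + A i (j + 1 + 1) = A (i + 1) (j + 1) + A (i - 1) (j + 1) :=
    mul_left_cancel₀ Complex.I_ne_zero (by linear_combination e₂)
  linear_combination (-e₁ - e₂') / 2

noncomputable def skewDiagPair (z : ℂ) (m : ℤ) : ℤ → ℤ → ℂ :=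
  z.re • (shiftPow m - shiftPow (-m)) + z.im • (Complex.I • (shiftPow m + shiftPow (-m)))

theorem skewDiagPair_mem_span_Gset (z : ℂ) {m : ℤ} (hm : 1 ≤ m) :
    skewDiagPair z m ∈ Submodule.span ℝ Gset :=
  add_mem (Submodule.smul_mem _ _ (Submodule.subset_span (Or.inl ⟨m, hm, rfl⟩)))
    (Submodule.smul_mem _ _ (Submodule.subset_span (Or.inr (Or.inr ⟨m, hm, rfl⟩))))

section SkewSequence

variable {a : ℤ → ℂ} (hskew : ∀ d, starRingEnd ℂ (a (-d)) = -a d)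
include hskew

theorem re_apply_zero_of_skew : (a 0).re = 0 := by
  have h := congrArg Complex.re (hskew 0)
  simp only [neg_zero, Complex.conj_re, Complex.neg_re] at h
  linarith

theorem apply_neg_of_skew (d : ℤ) : a (-d) = -starRingEnd ℂ (a d) := by
  rw [← map_neg, ← hskew, Complex.conj_conj]

theorem smul_idM_apply_of_skew (i j : ℤ) :
    ((a 0).im • (Complex.I • idM)) i j = if j - i = 0 then a (j - i) else 0 := by
  simp only [Pi.smul_apply, idM, sub_eq_zero, smul_eq_mul, Complex.real_smul]
  split_ifs with h
  · subst h
    apply Complex.ext <;> simp [re_apply_zero_of_skew hskew]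
  · simp

theorem skewDiagPair_apply_of_skew (m i j : ℤ) :
    skewDiagPair (a m) m i j =
      (if j - i = m then a (j - i) else 0) + (if i - j = m then a (j - i) else 0) := by
  obtain ⟨d, rfl⟩ : ∃ d, j = i + d := ⟨j - i, by ring⟩
  simp only [skewDiagPair, Pi.add_apply, Pi.sub_apply, Pi.smul_apply, shiftPow, smul_eq_mul,
    Complex.real_smul, add_sub_cancel_left, add_right_inj, sub_add_cancel_left, neg_eq_iff_eq_neg]
  split_ifs with h₁ h₂ <;> subst_vars
  · obtain rfl : d = 0 := by omega
    apply Complex.ext <;> simp [re_apply_zero_of_skew hskew]; ring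
  all_goals apply Complex.ext <;> simp [apply_neg_of_skew hskew]

theorem toeplitz_eq_sum_of_skew {N : ℤ} (hN : ∀ d, N < d → a d = 0) :
    toeplitz a = (a 0).im • (Complex.I • idM) + ∑ m ∈ Finset.Icc 1 N, skewDiagPair (a m) m := by
  funext i j
  rw [Pi.add_apply, Pi.add_apply, Finset.sum_apply, Finset.sum_apply]
  simp only [smul_idM_apply_of_skew hskew, skewDiagPair_apply_of_skew hskew,
    Finset.sum_add_distrib, Finset.sum_ite_eq, Finset.mem_Icc, toeplitz_apply]
  have hlow : j - i < -N → a (j - i) = 0 := fun h => by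
    rw [← neg_neg (j - i), apply_neg_of_skew hskew, hN _ (by omega), map_zero, neg_zero]
  split_ifs with h₀ <;> try first | omega | simp
  rcases lt_or_gt_of_ne h₀ with h | h
  · exact hlow (by omega)
  · exact hN _ (by omega)

theorem toeplitz_mem_span_Gset_of_skew {N : ℤ} (hN : ∀ d, N < d → a d = 0) :
    toeplitz a ∈ Submodule.span ℝ Gset := by
  rw [toeplitz_eq_sum_of_skew hskew hN]
  refine add_mem (Submodule.smul_mem _ _ (Submodule.subset_span (Or.inr (Or.inl rfl))))
    (Submodule.sum_mem _ fun m hm => skewDiagPair_mem_span_Gset _ (Finset.mem_Icc.mp hm).1)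

end SkewSequence

/-- `C_sh(ℂ)` is a *maximal* commutative Lie subalgebra of the skew-hermitian
matrices in `LT_ℤ(ℂ)`: it is commutative, and every skew-hermitian `A ∈ LT_ℤ(ℂ)`
commuting with all basic directions `G_σ` lies in the real span of the `G_σ`. -/
theorem statement4 :
    (∀ A ∈ Submodule.span ℝ Gset, ∀ B ∈ Submodule.span ℝ Gset,
        matMul A B - matMul B A = 0) ∧
    (∀ A : ℤ → ℤ → ℂ, LTZ A → SkewHermitian A →
        (∀ G ∈ Gset, matMul A G = matMul G A) →
        A ∈ Submodule.span ℝ Gset) := by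
  constructor
  · intro A hA B hB
    obtain ⟨a, rfl⟩ := span_Gset_le_range_toeplitz hA
    obtain ⟨b, rfl⟩ := span_Gset_le_range_toeplitz hB
    rw [matMul_toeplitz_comm, sub_self]
  · rintro A ⟨N, hN⟩ hskew hcomm
    have hA : A = toeplitz (A 0) := eq_toeplitz_of_apply_add_one_add_one <|
      apply_add_one_add_one_of_commute (hcomm _ (Or.inl ⟨1, le_rfl, rfl⟩))
        (hcomm _ (Or.inr (Or.inr ⟨1, le_rfl, rfl⟩)))
    rw [hA] at hskew hN ⊢
    refine toeplitz_mem_span_Gset_of_skew (N := N) (fun d => ?_) (fun d hd => ?_)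
    · simpa [toeplitz_apply] using hskew 0 d
    · simpa [toeplitz_apply] using hN 0 d (by simpa using hd)
end

section
/- LT_Z(R_as) decomposes as a direct sum of real vector spaces LT_Z(R_as) = P_{≤0} ⊕ AS(R_as), where P_{≤0} is the space of lower triangular matrices (all diagonals of index > 0 vanish) and AS(R_as) the antisymmetric matrices; explicitly, for P = Σ_j d_j Λ^j, π_{≤0}(P) = Σ_{j≤0} d_j Λ^j + Σ_{j<0} Λ^j d_{−j} and π_{as}(P) = Σ_{j>0} d_j Λ^j − Σ_{j>0} Λ^{−j} d_j. Both summands are Lie subalgebras. -/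
/-- Lower triangular: all diagonals of index `> 0` vanish. -/
def LowerT {R : Type*} [CommRing R] (P : ℤ → ℤ → R) : Prop :=
  ∀ i j : ℤ, i < j → P i j = 0

/-- `A^T = -A`. -/
def AntiSym {R : Type*} [CommRing R] (A : ℤ → ℤ → R) : Prop :=
  ∀ i j : ℤ, A j i = -A i j

/-- `π_{≤0}(P) = Σ_{j≤0} d_j Λ^j + Σ_{j<0} Λ^j d_{-j}`, entrywise. -/
def piLe {R : Type*} [CommRing R] (P : ℤ → ℤ → R) : ℤ → ℤ → R :=
  fun i j => if i < j then 0 else if i = j then P i i else P i j + P j i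

/-- `π_{as}(P) = Σ_{j>0} d_j Λ^j - Σ_{j>0} Λ^{-j} d_j`, entrywise. -/
def piAs {R : Type*} [CommRing R] (P : ℤ → ℤ → R) : ℤ → ℤ → R :=
  fun i j => if i < j then P i j else if i = j then 0 else -P j i

section

variable {R : Type*} [CommRing R] {A B P Q S : ℤ → ℤ → R}

lemma lowerT_piLe (P : ℤ → ℤ → R) : LowerT (piLe P) := fun i j hij => by
  simp [piLe, hij]

lemma antiSym_piAs (P : ℤ → ℤ → R) : AntiSym (piAs P) := fun i j => by
  rcases lt_trichotomy i j with h | rfl | h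
  · simp [piAs, h, h.not_gt, h.ne']
  · simp [piAs]
  · simp [piAs, h, h.not_gt, h.ne']

lemma piLe_add_piAs (P : ℤ → ℤ → R) : piLe P + piAs P = P := by
  funext i j
  simp only [Pi.add_apply, piLe, piAs]
  split_ifs <;> simp_all

lemma ltz_piLe (P : ℤ → ℤ → R) : LTZ (piLe P) :=
  ⟨0, fun i j h => lowerT_piLe P i j (by omega)⟩

lemma LTZ.piAs (hP : LTZ P) : LTZ (piAs P) := by
  obtain ⟨N, hN⟩ := hP
  refine ⟨max N 0, fun i j h => ?_⟩
  have hij : i < j := by omega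
  simp [_root_.piAs, hij, hN i j (by omega)]

lemma AntiSym.apply_self [IsAddTorsionFree R] (hS : AntiSym S) (i : ℤ) : S i i = 0 :=
  self_eq_neg.mp (hS i i)

lemma eq_piLe_of_eq_add [IsAddTorsionFree R] (hQ : LowerT Q) (hS : AntiSym S)
    (hP : P = Q + S) : Q = piLe P := by
  subst hP
  funext i j
  rcases lt_trichotomy i j with h | rfl | h
  · simp [piLe, h, hQ i j h]
  · simp [piLe, hS.apply_self]
  · simp only [piLe, Pi.add_apply, h.not_gt, h.ne', if_false, hQ j i h, hS i j]
    ring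

lemma eq_piAs_of_eq_add [IsAddTorsionFree R] (hQ : LowerT Q) (hS : AntiSym S)
    (hP : P = Q + S) : S = piAs P := by
  have hsum := (piLe_add_piAs P).trans hP
  rw [← eq_piLe_of_eq_add hQ hS hP] at hsum
  exact (add_left_cancel hsum).symm

lemma LowerT.matMul (hA : LowerT A) (hB : LowerT B) : LowerT (matMul A B) :=
  fun i j hij => finsum_eq_zero_of_forall_eq_zero fun k => by
    rcases lt_or_ge i k with h | h
    · rw [hA i k h, zero_mul]
    · rw [hB k j (h.trans_lt hij), mul_zero]

lemma LowerT.sub (hA : LowerT A) (hB : LowerT B) : LowerT (A - B) := fun i j hij => by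
  simp [hA i j hij, hB i j hij]

lemma AntiSym.matMul_apply_swap (hA : AntiSym A) (hB : AntiSym B) (i j : ℤ) :
    matMul A B j i = matMul B A i j :=
  finsum_congr fun k => by rw [hA k j, hB i k, neg_mul_neg, mul_comm]

lemma AntiSym.commutator (hA : AntiSym A) (hB : AntiSym B) :
    AntiSym (matMul A B - matMul B A) := fun i j => by
  simp only [Pi.sub_apply, hA.matMul_apply_swap hB i j, hB.matMul_apply_swap hA i j, neg_sub]

end

/-- `LT_ℤ(R_as) = P_{≤0} ⊕ AS(R_as)` with the stated projections, and both
summands are Lie subalgebras. -/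
theorem statement7 {R : Type*} [CommRing R] [Algebra ℝ R] :
    (∀ P : ℤ → ℤ → R,
      LowerT (piLe P) ∧ AntiSym (piAs P) ∧ P = piLe P + piAs P ∧
      (LTZ P → LTZ (piLe P) ∧ LTZ (piAs P)) ∧
      (∀ Q S : ℤ → ℤ → R, LowerT Q → AntiSym S → P = Q + S →
        Q = piLe P ∧ S = piAs P)) ∧
    (∀ A B : ℤ → ℤ → R, LowerT A → LowerT B →
        LowerT (matMul A B - matMul B A)) ∧
    (∀ A B : ℤ → ℤ → R, LTZ A → LTZ B → AntiSym A → AntiSym B →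
        AntiSym (matMul A B - matMul B A)) := by
  have : IsAddTorsionFree R := .of_isTorsionFree ℝ R
  refine ⟨fun P => ⟨lowerT_piLe P, antiSym_piAs P, (piLe_add_piAs P).symm,
      fun hP => ⟨ltz_piLe P, hP.piAs⟩, fun Q S hQ hS hP => ?_⟩,
    fun A B hA hB => (hA.matMul hB).sub (hB.matMul hA),
    fun A B _ _ hA hB => hA.commutator hB⟩
  exact ⟨eq_piLe_of_eq_add hQ hS hP, eq_piAs_of_eq_add hQ hS hP⟩
end

section
/- Let {G_σ} be a commuting family of matrices and {𝒢_σ} a family of simultaneous conjugates 𝒢_σ = g G_σ g^{-1} (so all 𝒢_σ mutually commute). If the 𝒢_σ satisfy the Lax equations ∂_{σ1}(𝒢_{σ2}) = [π_{sh}(𝒢_{σ1}), 𝒢_{σ2}] for all σ1, σ2, then the projections B_σ := π_{sh}(𝒢_σ) satisfy the zero curvature relations ∂_{σ1}(B_{σ2}) − ∂_{σ2}(B_{σ1}) − [B_{σ1}, B_{σ2}] = 0. -/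
/-!
Since `𝒢 σ₁` and `𝒢 σ₂` commute, splitting each into its `π₋` and `πsh` parts turns the Lax
equations into `∂_{σ₁} B_{σ₂} - ∂_{σ₂} B_{σ₁} = πsh (⁅B_{σ₁}, B_{σ₂}⁆ - ⁅π₋ 𝒢 σ₁, π₋ 𝒢 σ₂⁆)`.
The first bracket lies in `L₊` and the second in `L₋`, as both are Lie subalgebras, so the right
hand side is `⁅B_{σ₁}, B_{σ₂}⁆`.
-/
theorem Commute.units_conj {M : Type*} [Monoid M] {a b : M} (h : Commute a b) (u : Mˣ) :
    Commute (↑u * a * ↑u⁻¹) (↑u * b * ↑u⁻¹) := by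
  simp only [Commute, SemiconjBy, mul_assoc, Units.inv_mul_cancel_left]
  rw [← mul_assoc a, h.eq, mul_assoc]

theorem lie_sub_lie_of_commute_add {R : Type*} [Ring R] {a b c d : R}
    (h : Commute (a + b) (c + d)) : ⁅b, c + d⁆ - ⁅d, a + b⁆ = ⁅b, d⁆ - ⁅a, c⁆ := by
  have hlie : ⁅a + b, c + d⁆ = 0 := by rw [Ring.lie_def, h.eq, sub_self]
  rw [← sub_eq_zero, ← hlie]
  simp only [Ring.lie_def]
  noncomm_ring

theorem proj_lie_sub_lie_of_commute {L : Type*} [Ring L] {πm πsh : L →+ L}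
    (hsum : ∀ x, πm x + πsh x = x)
    (hsub₁ : ∀ x y, πm ⁅πm x, πm y⁆ = ⁅πm x, πm y⁆)
    (hsub₂ : ∀ x y, πsh ⁅πsh x, πsh y⁆ = ⁅πsh x, πsh y⁆)
    {A B : L} (h : Commute A B) :
    πsh (⁅πsh A, B⁆ - ⁅πsh B, A⁆) = ⁅πsh A, πsh B⁆ := by
  have hminus : πsh ⁅πm A, πm B⁆ = 0 := by
    simpa [hsub₁] using hsum ⁅πm A, πm B⁆
  have key := lie_sub_lie_of_commute_add (a := πm A) (b := πsh A) (c := πm B) (d := πsh B)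
    (by rwa [hsum, hsum])
  rw [hsum, hsum] at key
  rw [key, map_sub, hsub₂, hminus, sub_zero]

theorem statement8_general {L : Type*} [Ring L] {Sig : Type*}
    (πm πsh : L →+ L)
    (hsum : ∀ x, πm x + πsh x = x)
    (hsub₁ : ∀ x y, πm (πm x * πm y - πm y * πm x) = πm x * πm y - πm y * πm x)
    (hsub₂ : ∀ x y, πsh (πsh x * πsh y - πsh y * πsh x) = πsh x * πsh y - πsh y * πsh x)
    (D : Sig → L → L)
    (hDproj : ∀ σ x, D σ (πsh x) = πsh (D σ x))
    (g : Lˣ) (G : Sig → L)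
    (hGcomm : ∀ σ τ, G σ * G τ = G τ * G σ)
    (𝒢 : Sig → L) (hconj : ∀ σ, 𝒢 σ = ↑g * G σ * ↑g⁻¹)
    (hlax : ∀ σ₁ σ₂, D σ₁ (𝒢 σ₂) = πsh (𝒢 σ₁) * 𝒢 σ₂ - 𝒢 σ₂ * πsh (𝒢 σ₁)) :
    ∀ σ₁ σ₂, D σ₁ (πsh (𝒢 σ₂)) - D σ₂ (πsh (𝒢 σ₁))
      - (πsh (𝒢 σ₁) * πsh (𝒢 σ₂) - πsh (𝒢 σ₂) * πsh (𝒢 σ₁)) = 0 := by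
  intro σ₁ σ₂
  have hcomm : Commute (𝒢 σ₁) (𝒢 σ₂) := by
    rw [hconj, hconj]
    exact Commute.units_conj (hGcomm σ₁ σ₂) g
  rw [hDproj, hDproj, hlax, hlax, ← map_sub, sub_eq_zero]
  exact proj_lie_sub_lie_of_commute hsum hsub₁ hsub₂ hcomm

/-- Zero curvature relations for the projections `B_σ = π_{sh}(𝒢_σ)` of a
solution of the Lax equations. `L` is an associative algebra decomposed as a
direct sum of two Lie subalgebras via the complementary projections
`πm = π_-` and `πsh`, with commuting derivations `D σ` acting entrywise
(hence commuting with the projections). -/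
theorem statement8 {L : Type*} [Ring L] {Sig : Type*}
    (πm πsh : L →+ L)
    (hsum : ∀ x, πm x + πsh x = x)
    (hid₁ : ∀ x, πm (πm x) = πm x)
    (hid₂ : ∀ x, πsh (πsh x) = πsh x)
    (hmix : ∀ x, πm (πsh x) = 0)
    (hsub₁ : ∀ x y, πm (πm x * πm y - πm y * πm x) = πm x * πm y - πm y * πm x)
    (hsub₂ : ∀ x y, πsh (πsh x * πsh y - πsh y * πsh x) = πsh x * πsh y - πsh y * πsh x)
    (D : Sig → L → L)
    (hDadd : ∀ σ x y, D σ (x + y) = D σ x + D σ y)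
    (hDmul : ∀ σ x y, D σ (x * y) = D σ x * y + x * D σ y)
    (hDcomm : ∀ σ τ x, D σ (D τ x) = D τ (D σ x))
    (hDproj : ∀ σ x, D σ (πsh x) = πsh (D σ x))
    (g : Lˣ) (G : Sig → L)
    (hGcomm : ∀ σ τ, G σ * G τ = G τ * G σ)
    (𝒢 : Sig → L) (hconj : ∀ σ, 𝒢 σ = ↑g * G σ * ↑g⁻¹)
    (hlax : ∀ σ₁ σ₂, D σ₁ (𝒢 σ₂) = πsh (𝒢 σ₁) * 𝒢 σ₂ - 𝒢 σ₂ * πsh (𝒢 σ₁)) :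
    ∀ σ₁ σ₂, D σ₁ (πsh (𝒢 σ₂)) - D σ₂ (πsh (𝒢 σ₁))
      - (πsh (𝒢 σ₁) * πsh (𝒢 σ₂) - πsh (𝒢 σ₂) * πsh (𝒢 σ₁)) = 0 :=
  statement8_general πm πsh hsum hsub₁ hsub₂ D hDproj g G hGcomm 𝒢 hconj hlax
end

section
/- (Sato–Wilson implies Lax) Let K be invertible in L, let 𝒢_σ := K G_σ K^{-1} where the G_σ are constant (∂_τ(G_σ) = 0) and mutually commuting, and set A_σ := π_{sh}(𝒢_σ) − 𝒢_σ. If ∂_σ(K) = A_σ K for all σ, then ∂_{σ1}(𝒢_{σ2}) = [π_{sh}(𝒢_{σ1}), 𝒢_{σ2}] for all σ1, σ2. -/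
section Leibniz

variable {L : Type*} [Ring L] {D : L → L} (hD : ∀ x y, D (x * y) = D x * y + x * D y)
include hD

theorem map_one_eq_zero_of_leibniz : D 1 = 0 := by
  simpa using hD 1 1

theorem map_units_inv_of_leibniz (u : Lˣ) : D ↑u⁻¹ = -(↑u⁻¹ * D u * ↑u⁻¹) := by
  have h : D ↑u⁻¹ * u + ↑u⁻¹ * D u = 0 := by
    rw [← hD, Units.inv_mul, map_one_eq_zero_of_leibniz hD]
  calc D ↑u⁻¹ = (D ↑u⁻¹ * u + ↑u⁻¹ * D u) * ↑u⁻¹ - ↑u⁻¹ * D u * ↑u⁻¹ := by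
        rw [add_mul, mul_assoc (D _), Units.mul_inv, mul_one, add_sub_cancel_right]
    _ = -(↑u⁻¹ * D u * ↑u⁻¹) := by rw [h, zero_mul, zero_sub]

theorem map_units_conj_of_leibniz (u : Lˣ) {g : L} (hg : D g = 0) :
    D (↑u * g * ↑u⁻¹) =
      D u * ↑u⁻¹ * (↑u * g * ↑u⁻¹) - (↑u * g * ↑u⁻¹) * (D u * ↑u⁻¹) := by
  rw [hD, hD, hg, map_units_inv_of_leibniz hD]
  simp only [mul_zero, add_zero, mul_neg, mul_assoc, Units.inv_mul_cancel_left]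
  abel

end Leibniz

theorem statement10_general {L : Type*} [Ring L] {Sig : Type*}
    (πsh : L →+ L)
    (D : Sig → L → L)
    (hDmul : ∀ σ x y, D σ (x * y) = D σ x * y + x * D σ y)
    (G : Sig → L)
    (hGconst : ∀ σ τ, D τ (G σ) = 0)
    (hGcomm : ∀ σ τ, G σ * G τ = G τ * G σ)
    (K : Lˣ)
    (𝒢 : Sig → L) (hconj : ∀ σ, 𝒢 σ = ↑K * G σ * ↑K⁻¹)
    (A : Sig → L) (hA : ∀ σ, A σ = πsh (𝒢 σ) - 𝒢 σ)
    (hSW : ∀ σ, D σ (↑K : L) = A σ * ↑K) :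
    ∀ σ₁ σ₂, D σ₁ (𝒢 σ₂) = πsh (𝒢 σ₁) * 𝒢 σ₂ - 𝒢 σ₂ * πsh (𝒢 σ₁) := by
  intro σ₁ σ₂
  have hlogK : D σ₁ K * ↑K⁻¹ = A σ₁ := by
    rw [hSW, mul_assoc, Units.mul_inv, mul_one]
  have hcomm : 𝒢 σ₁ * 𝒢 σ₂ = 𝒢 σ₂ * 𝒢 σ₁ := by
    rw [hconj, hconj]
    exact (Commute.units_conj (hGcomm σ₁ σ₂) K).eq
  rw [hconj σ₂, map_units_conj_of_leibniz (hDmul σ₁) K (hGconst σ₂ σ₁), hlogK, ← hconj, hA,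
    sub_mul, mul_sub, hcomm]
  abel

/-- Sato–Wilson implies Lax: if `K` is a unit, `𝒢_σ = K G_σ K⁻¹` with the `G_σ`
constant and mutually commuting, `A_σ = π_{sh}(𝒢_σ) - 𝒢_σ`, and
`∂_σ(K) = A_σ K`, then the `𝒢_σ` satisfy the Lax equations. -/
theorem statement10 {L : Type*} [Ring L] {Sig : Type*}
    (πsh : L →+ L)
    (D : Sig → L → L)
    (hDadd : ∀ σ x y, D σ (x + y) = D σ x + D σ y)
    (hDmul : ∀ σ x y, D σ (x * y) = D σ x * y + x * D σ y)
    (G : Sig → L)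
    (hGconst : ∀ σ τ, D τ (G σ) = 0)
    (hGcomm : ∀ σ τ, G σ * G τ = G τ * G σ)
    (K : Lˣ)
    (𝒢 : Sig → L) (hconj : ∀ σ, 𝒢 σ = ↑K * G σ * ↑K⁻¹)
    (A : Sig → L) (hA : ∀ σ, A σ = πsh (𝒢 σ) - 𝒢 σ)
    (hSW : ∀ σ, D σ (↑K : L) = A σ * ↑K) :
    ∀ σ₁ σ₂, D σ₁ (𝒢 σ₂) = πsh (𝒢 σ₁) * 𝒢 σ₂ - 𝒢 σ₂ * πsh (𝒢 σ₁) :=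
  statement10_general πsh D hDmul G hGconst hGcomm K 𝒢 hconj A hA hSW
end
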